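/- Let ∇ ⊂ ℝ⁴ be the convex hull of the seven 0-1 vectors (0,0,0,0), (1,1,0,0), (1,0,1,0), (0,1,1,1), (1,1,1,0), (0,1,0,0), (0,0,1,0). Then ∇ equals the set of points (x,y,z,w) ∈ ℝ⁴ satisfying w ≥ 0, x ≥ 0, y ≤ 1, z ≤ 1, x - y - z + 2w ≤ 0, x - y - z + w ≥ -1, x + w ≤ 1, w ≤ y, w ≤ z, and these seven points are exactly the lattice points of ∇. -/

import Mathlib

open Pointwise

def pts : Set (ℝ × ℝ × ℝ × ℝ) :=
  {(0, 0, 0, 0), (1, 1, 0, 0), (1, 0, 1, 0), (0, 1, 1, 1), (1, 1, 1, 0),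
    (0, 1, 0, 0), (0, 0, 1, 0)}

def nabla : Set (ℝ × ℝ × ℝ × ℝ) :=
  {p : ℝ × ℝ × ℝ × ℝ |
    0 ≤ p.2.2.2 ∧
    0 ≤ p.1 ∧
    p.2.1 ≤ 1 ∧
    p.2.2.1 ≤ 1 ∧
    p.1 - p.2.1 - p.2.2.1 + 2 * p.2.2.2 ≤ 0 ∧
    -1 ≤ p.1 - p.2.1 - p.2.2.1 + p.2.2.2 ∧
    p.1 + p.2.2.2 ≤ 1 ∧
    p.2.2.2 ≤ p.2.1 ∧
    p.2.2.2 ≤ p.2.2.1}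

/-!
Every vertex satisfies the nine inequalities, and `nabla` is convex, so the hull lies in `nabla`.
Conversely, the hyperplanes `y + z - w = 1` and `x = y - w` cut `nabla` into four simplices, each
spanned by five of the seven points, and on each of them the barycentric coordinates are explicit
affine functions of `(x, y, z, w)`. The lattice points are then the integer solutions of the nine
inequalities, which a bounded case analysis enumerates.
-/

lemma convex_nabla : Convex ℝ nabla := by
  rintro ⟨px, py, pz, pw⟩ ⟨p1, p2, p3, p4, p5, p6, p7, p8, p9⟩
    ⟨qx, qy, qz, qw⟩ ⟨q1, q2, q3, q4, q5, q6, q7, q8, q9⟩ a b ha hb hab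
  simp only [nabla, Set.mem_ofPred_eq, Prod.smul_mk, Prod.mk_add_mk, smul_eq_mul] at *
  refine ⟨?_, ?_, ?_, ?_, ?_, ?_, ?_, ?_, ?_⟩ <;> nlinarith

lemma pts_subset_nabla : pts ⊆ nabla := by
  intro p hp
  simp only [pts, Set.mem_insert_iff, Set.mem_singleton_iff] at hp
  rcases hp with rfl | rfl | rfl | rfl | rfl | rfl | rfl <;> norm_num [nabla]

lemma convexHull_pts_subset_nabla : convexHull ℝ pts ⊆ nabla :=
  convexHull_min pts_subset_nabla convex_nabla

lemma mem_convexHull_pts_of_weights {x y z w c₀ c₁ c₂ c₃ c₄ c₅ c₆ : ℝ}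
    (h₀ : 0 ≤ c₀) (h₁ : 0 ≤ c₁) (h₂ : 0 ≤ c₂) (h₃ : 0 ≤ c₃) (h₄ : 0 ≤ c₄)
    (h₅ : 0 ≤ c₅) (h₆ : 0 ≤ c₆) (hsum : c₀ + c₁ + c₂ + c₃ + c₄ + c₅ + c₆ = 1)
    (hx : x = c₁ + c₂ + c₄) (hy : y = c₁ + c₃ + c₄ + c₅)
    (hz : z = c₂ + c₃ + c₄ + c₆) (hw : w = c₃) :
    ((x, y, z, w) : ℝ × ℝ × ℝ × ℝ) ∈ convexHull ℝ pts := by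
  let c : Fin 7 → ℝ := ![c₀, c₁, c₂, c₃, c₄, c₅, c₆]
  let v : Fin 7 → ℝ × ℝ × ℝ × ℝ :=
    ![(0, 0, 0, 0), (1, 1, 0, 0), (1, 0, 1, 0), (0, 1, 1, 1), (1, 1, 1, 0),
      (0, 1, 0, 0), (0, 0, 1, 0)]
  have hmem : ∑ i, c i • v i ∈ convexHull ℝ pts := by
    refine (convex_convexHull ℝ pts).sum_mem ?_ ?_ ?_
    · intro i _
      fin_cases i <;> assumption
    · simpa [Fin.sum_univ_seven, c] using hsum
    · intro i _
      fin_cases i <;> exact subset_convexHull ℝ pts (by simp [pts, v])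
  have hcomb : ∑ i, c i • v i = (x, y, z, w) := by
    simp [Fin.sum_univ_seven, c, v, hx, hy, hz, hw]
  rwa [hcomb] at hmem

lemma nabla_subset_convexHull_pts : nabla ⊆ convexHull ℝ pts := by
  rintro ⟨x, y, z, w⟩ ⟨h₁, h₂, h₃, h₄, h₅, h₆, h₇, h₈, h₉⟩
  simp only at h₁ h₂ h₃ h₄ h₅ h₆ h₇ h₈ h₉
  rcases le_total (y + z - w) 1 with hyz | hyz <;> rcases le_total x (y - w) with hxy | hxy
  · exact mem_convexHull_pts_of_weights (c₀ := 1 - y - z + w) (c₁ := x) (c₂ := 0) (c₃ := w)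
      (c₄ := 0) (c₅ := y - w - x) (c₆ := z - w)
      (by linarith) h₂ le_rfl h₁ le_rfl (by linarith) (by linarith)
      (by ring) (by ring) (by ring) (by ring) rfl
  · exact mem_convexHull_pts_of_weights (c₀ := 1 - y - z + w) (c₁ := y - w) (c₂ := x - y + w)
      (c₃ := w) (c₄ := 0) (c₅ := 0) (c₆ := y + z - x - 2 * w)
      (by linarith) (by linarith) (by linarith) h₁ le_rfl le_rfl (by linarith)
      (by ring) (by ring) (by ring) (by ring) rfl
  · exact mem_convexHull_pts_of_weights (c₀ := 0) (c₁ := x - y - z + w + 1) (c₂ := 0) (c₃ := w)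
      (c₄ := y + z - w - 1) (c₅ := y - w - x) (c₆ := 1 - y)
      le_rfl (by linarith) le_rfl h₁ (by linarith) (by linarith) (by linarith)
      (by ring) (by ring) (by ring) (by ring) rfl
  · exact mem_convexHull_pts_of_weights (c₀ := 0) (c₁ := 1 - z) (c₂ := x - y + w) (c₃ := w)
      (c₄ := y + z - w - 1) (c₅ := 0) (c₆ := 1 - x - w)
      le_rfl (by linarith) (by linarith) h₁ (by linarith) le_rfl (by linarith)
      (by ring) (by ring) (by ring) (by ring) rfl

lemma int_mem_nabla_iff (a b c d : ℤ) :
    (((a : ℝ), (b : ℝ), (c : ℝ), (d : ℝ)) : ℝ × ℝ × ℝ × ℝ) ∈ nabla ↔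
      0 ≤ d ∧ 0 ≤ a ∧ b ≤ 1 ∧ c ≤ 1 ∧ a - b - c + 2 * d ≤ 0 ∧ -1 ≤ a - b - c + d ∧
        a + d ≤ 1 ∧ d ≤ b ∧ d ≤ c := by
  simp only [nabla, Set.mem_ofPred_eq]
  norm_cast

theorem stmt19 :
    convexHull ℝ pts = nabla ∧
      {v : ℤ × ℤ × ℤ × ℤ | (((v.1 : ℝ), (v.2.1 : ℝ), (v.2.2.1 : ℝ), (v.2.2.2 : ℝ)) : ℝ × ℝ × ℝ × ℝ) ∈ nabla}
        = {(0, 0, 0, 0), (1, 1, 0, 0), (1, 0, 1, 0), (0, 1, 1, 1), (1, 1, 1, 0),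
            (0, 1, 0, 0), (0, 0, 1, 0)} := by
  refine ⟨convexHull_pts_subset_nabla.antisymm nabla_subset_convexHull_pts, ?_⟩
  ext ⟨a, b, c, d⟩
  simp only [Set.mem_ofPred_eq, int_mem_nabla_iff, Set.mem_insert_iff, Set.mem_singleton_iff,
    Prod.mk.injEq]
  omega
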